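/- arXiv:2511.15834 — 4 statements merged into one kernel-verified Lean document; each statement's English description precedes it below -/
import Mathlib

section
/- For a prime p ≥ 5, the number of undirected Hamiltonian cycles on Z/p invariant under the reflection k ↦ -k (mod p) equals ((p-1)/2) · 2^((p-3)/2) · ((p-3)/2)!. -/
open Equiv
set_option linter.unusedSectionVars false

variable (p : ℕ) [NeZero p]

/-- `σ` is a (directed) Hamiltonian cycle on the `p` vertices `ZMod p`:
a single cycle whose support is everything. -/
def IsHC (σ : Perm (ZMod p)) : Prop := σ.IsCycle ∧ σ.support = Finset.univ

/-- The type of directed Hamiltonian cycles on `ZMod p`. -/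
def HC := {σ : Perm (ZMod p) // IsHC p σ}

/-- Rotation `k ↦ r + k`. -/
def rot (r : ZMod p) : Perm (ZMod p) := Equiv.addLeft r

/-- Reflection `k ↦ s - k`. -/
def reflAt (s : ZMod p) : Perm (ZMod p) := Equiv.subLeft s

/-- `g` fixes the *undirected* cycle underlying `σ` (conjugation can reverse orientation). -/
def FixedBy (g σ : Perm (ZMod p)) : Prop := g * σ * g⁻¹ = σ ∨ g * σ * g⁻¹ = σ⁻¹

lemma rot_zero : rot p 0 = 1 := by ext x; simp [rot]

lemma rot_neg (r : ZMod p) : rot p (-r) = (rot p r)⁻¹ := by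
  ext x; simp [rot, neg_add_eq_sub, eq_sub_iff_add_eq]

lemma rot_add (r s : ZMod p) : rot p (r + s) = rot p r * rot p s := by
  ext x; simp [rot, add_assoc]

/-- The action of a rotation on a cycle, by conjugation. -/
def rotAct (r : ZMod p) (σ : Perm (ZMod p)) : Perm (ZMod p) := rot p r * σ * (rot p r)⁻¹

lemma rotAct_zero (σ : Perm (ZMod p)) : rotAct p 0 σ = σ := by
  simp [rotAct, rot_zero]

lemma rotAct_inv (r : ZMod p) (σ : Perm (ZMod p)) :
    (rotAct p r σ)⁻¹ = rotAct p r σ⁻¹ := by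
  simp [rotAct, mul_inv_rev, mul_assoc]

lemma rotAct_rotAct (r s : ZMod p) (σ : Perm (ZMod p)) :
    rotAct p r (rotAct p s σ) = rotAct p (r + s) σ := by
  simp [rotAct, rot_add, mul_inv_rev, mul_assoc]

lemma rotAct_neg_cancel (r : ZMod p) (σ : Perm (ZMod p)) :
    rotAct p (-r) (rotAct p r σ) = σ := by
  rw [rotAct_rotAct, neg_add_cancel, rotAct_zero]

/-- Setoid identifying a directed cycle with its reversal: undirected cycles. -/
def revSetoid : Setoid (HC p) where
  r σ τ := τ.1 = σ.1 ∨ τ.1 = σ.1⁻¹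
  iseqv := by
    constructor
    · exact fun a => Or.inl rfl
    · rintro a b (h | h)
      · exact Or.inl h.symm
      · right; rw [h, inv_inv]
    · rintro a b c (h1 | h1) (h2 | h2) <;> rw [h2, h1] <;> simp
/-- Undirected Hamiltonian cycles. -/
def UCyc := Quotient (revSetoid p)

/-- Setoid identifying cycles up to rotation and reversal: the equivalence classes
of undirected cycles under rotation. -/
def rotSetoid : Setoid (HC p) where
  r σ τ := ∃ r : ZMod p, τ.1 = rotAct p r σ.1 ∨ τ.1 = (rotAct p r σ.1)⁻¹
  iseqv := by
    constructor
    · exact fun a => ⟨0, Or.inl (by rw [rotAct_zero])⟩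
    · rintro a b ⟨r, h | h⟩ <;> refine ⟨-r, ?_⟩
      · left; rw [h, rotAct_neg_cancel]
      · right; rw [h, rotAct_inv, inv_inv, rotAct_neg_cancel]
    · rintro a b c ⟨r, h1 | h1⟩ ⟨s, h2 | h2⟩ <;> refine ⟨s + r, ?_⟩ <;>
        rw [h2, h1] <;>
        simp [rotAct_inv, rotAct_rotAct]
/-- Rotation classes of undirected Hamiltonian cycles. -/
def RotClasses := Quotient (rotSetoid p)

section Stmt4AuxSection

namespace Stmt4Aux



variable [Fact p.Prime]

/-- `x` is "positive": its value is in `[1, (p-1)/2]`. -/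
def IsPos (x : ZMod p) : Prop := 0 < x.val ∧ 2 * x.val < p

instance : DecidablePred (IsPos p) := fun _ => instDecidableAnd

lemma p_odd (hp : 5 ≤ p) : p % 2 = 1 := by
  have hprime : p.Prime := Fact.out
  exact Nat.odd_iff.mp (hprime.odd_of_ne_two (by omega))

lemma isPos_ne_zero {x : ZMod p} (h : IsPos p x) : x ≠ 0 := by
  intro h0
  rw [h0] at h
  simp [IsPos] at h

lemma isPos_neg_iff (hp : 5 ≤ p) {x : ZMod p} (hx : x ≠ 0) :
    IsPos p (-x) ↔ ¬ IsPos p x := by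
  have h1 : (-x).val = p - x.val := by rw [ZMod.neg_val, if_neg hx]
  have h2 : x.val < p := ZMod.val_lt x
  have h3 : x.val ≠ 0 := fun h => hx ((ZMod.val_eq_zero x).mp h)
  have h4 := p_odd p hp
  unfold IsPos
  rw [h1]
  omega

lemma trichotomy (hp : 5 ≤ p) (x : ZMod p) :
    x = 0 ∨ IsPos p x ∨ IsPos p (-x) := by
  by_cases hx : x = 0
  · exact Or.inl hx
  · by_cases h : IsPos p x
    · exact Or.inr (Or.inl h)
    · exact Or.inr (Or.inr ((isPos_neg_iff p hp hx).mpr h))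

lemma not_isPos_zero : ¬ IsPos p (0 : ZMod p) := by simp [IsPos]

lemma not_isPos_neg (hp : 5 ≤ p) {x : ZMod p} (h : IsPos p x) : ¬ IsPos p (-x) := by
  rw [isPos_neg_iff p hp (isPos_ne_zero p h)]
  exact fun h' => h' h

/-- The positives. -/
abbrev Pos := {x : ZMod p // IsPos p x}

instance : Fintype (Pos p) := by unfold Pos; infer_instance

def posOfFin (hp : 5 ≤ p) (i : Fin ((p - 1) / 2)) : Pos p :=
  ⟨((i.1 + 1 : ℕ) : ZMod p), by
    have hi := i.2
    have hodd := p_odd p hp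
    have hlt : i.1 + 1 < p := by omega
    constructor <;> rw [ZMod.val_cast_of_lt hlt] <;> omega⟩

lemma card_pos (hp : 5 ≤ p) : Nat.card (Pos p) = (p - 1) / 2 := by
  have hodd := p_odd p hp
  have hbij : Function.Bijective (posOfFin p hp) := by
    constructor
    · intro i j hij
      have h1 : ((i.1 + 1 : ℕ) : ZMod p).val = ((j.1 + 1 : ℕ) : ZMod p).val := by
        have := congrArg (fun y : Pos p => y.1.val) hij
        simpa [posOfFin] using this
      have hi := i.2; have hj := j.2
      rw [ZMod.val_cast_of_lt (by omega), ZMod.val_cast_of_lt (by omega)] at h1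
      exact Fin.ext (by omega)
    · rintro ⟨x, hx1, hx2⟩
      have hxv : x.val ≠ 0 := by omega
      refine ⟨⟨x.val - 1, by omega⟩, ?_⟩
      apply Subtype.ext
      show ((x.val - 1 + 1 : ℕ) : ZMod p) = x
      rw [Nat.sub_add_cancel (by omega)]
      exact ZMod.natCast_rightInverse x
  calc Nat.card (Pos p) = Nat.card (Fin ((p-1)/2)) :=
        (Nat.card_eq_of_bijective (posOfFin p hp) hbij).symm
    _ = (p - 1) / 2 := by simp


/-- `y` or `-y` according to a sign bit. -/
def signed (y : Pos p) (b : Bool) : ZMod p := if b then y.1 else -y.1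

lemma signed_inj (hp : 5 ≤ p) {y y' : Pos p} {b b' : Bool}
    (h : signed p y b = signed p y' b') : y = y' ∧ b = b' := by
  cases b <;> cases b'
  · replace h : -y.1 = -y'.1 := h
    exact ⟨Subtype.ext (neg_injective h), rfl⟩
  · replace h : -y.1 = y'.1 := h
    exfalso
    have hy : IsPos p (-y.1) := by rw [h]; exact y'.2
    exact not_isPos_neg p hp y.2 hy
  · replace h : y.1 = -y'.1 := h
    exfalso
    have hy : IsPos p (-y'.1) := by rw [← h]; exact y.2
    exact not_isPos_neg p hp y'.2 hy
  · exact ⟨Subtype.ext h, rfl⟩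

/-- The underlying function of the odd permutation built from a permutation of
the positives together with sign bits. -/
def buildFun (g : Perm (Pos p)) (s : Pos p → Bool) (x : ZMod p) : ZMod p :=
  if h : IsPos p x then signed p (g ⟨x, h⟩) (s ⟨x, h⟩)
  else if h2 : IsPos p (-x) then -(signed p (g ⟨-x, h2⟩) (s ⟨-x, h2⟩))
  else 0

lemma buildFun_pos (g : Perm (Pos p)) (s : Pos p → Bool) {x : ZMod p} (h : IsPos p x) :
    buildFun p g s x = signed p (g ⟨x, h⟩) (s ⟨x, h⟩) := dif_pos h

lemma buildFun_zero (g : Perm (Pos p)) (s : Pos p → Bool) : buildFun p g s 0 = 0 := by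
  rw [buildFun, dif_neg (not_isPos_zero p), dif_neg (by rw [neg_zero]; exact not_isPos_zero p)]

lemma buildFun_neg_of_pos (hp : 5 ≤ p) (g : Perm (Pos p)) (s : Pos p → Bool) {x : ZMod p}
    (h : IsPos p x) : buildFun p g s (-x) = -(buildFun p g s x) := by
  rw [buildFun_pos p g s h, buildFun]
  rw [dif_neg (not_isPos_neg p hp h)]
  simp only [neg_neg]
  rw [dif_pos h]

lemma buildFun_odd (hp : 5 ≤ p) (g : Perm (Pos p)) (s : Pos p → Bool) (x : ZMod p) :
    buildFun p g s (-x) = -(buildFun p g s x) := by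
  rcases trichotomy p hp x with h | h | h
  · rw [h, neg_zero, buildFun_zero, neg_zero]
  · exact buildFun_neg_of_pos p hp g s h
  · have := buildFun_neg_of_pos p hp g s h
    rw [neg_neg] at this
    rw [this, neg_neg]

lemma buildFun_comp (hp : 5 ≤ p) (g g' : Perm (Pos p)) (s s' : Pos p → Bool)
    (hg : ∀ y, g' (g y) = y) (hs : ∀ y, s' (g y) = s y) (x : ZMod p) :
    buildFun p g' s' (buildFun p g s x) = x := by
  have key : ∀ z : ZMod p, IsPos p z → buildFun p g' s' (buildFun p g s z) = z := by
    intro z hz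
    rw [buildFun_pos p g s hz]
    have he : (⟨(g ⟨z, hz⟩).1, (g ⟨z, hz⟩).2⟩ : Pos p) = g ⟨z, hz⟩ := rfl
    rcases hb : s ⟨z, hz⟩ with _ | _
    · show buildFun p g' s' (-(g ⟨z, hz⟩).1) = z
      rw [buildFun_odd p hp, buildFun_pos p g' s' (g ⟨z, hz⟩).2, he, hs, hg, hb]
      show -(-z) = z
      rw [neg_neg]
    · show buildFun p g' s' ((g ⟨z, hz⟩).1) = z
      rw [buildFun_pos p g' s' (g ⟨z, hz⟩).2, he, hs, hg, hb]
      rfl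
  rcases trichotomy p hp x with h | h | h
  · rw [h, buildFun_zero, buildFun_zero]
  · exact key x h
  · have hx : x = -(-x) := (neg_neg x).symm
    rw [hx, buildFun_odd p hp, buildFun_odd p hp, key (-x) h]

/-- The odd permutation built from a permutation of the positives and sign bits. -/
def buildPerm (hp : 5 ≤ p) (g : Perm (Pos p)) (s : Pos p → Bool) : Perm (ZMod p) where
  toFun := buildFun p g s
  invFun := buildFun p g⁻¹ (fun y => s (g⁻¹ y))
  left_inv := buildFun_comp p hp g g⁻¹ s (fun y => s (g⁻¹ y))
    (fun y => Equiv.symm_apply_apply g y)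
    (fun y => by show s (g⁻¹ (g y)) = s y; exact congrArg s (Equiv.symm_apply_apply g y))
  right_inv := buildFun_comp p hp g⁻¹ g (fun y => s (g⁻¹ y)) s
    (fun y => Equiv.apply_symm_apply g y) (fun y => rfl)

lemma buildPerm_apply (hp : 5 ≤ p) (g : Perm (Pos p)) (s : Pos p → Bool) (x : ZMod p) :
    buildPerm p hp g s x = buildFun p g s x := rfl

/-- Recover the permutation of the positives from an odd permutation. -/
def recoverFun (c : Perm (ZMod p))
    (hc : ∀ y : Pos p, IsPos p (c y.1) ∨ IsPos p (-(c y.1))) : Pos p → Pos p := fun y =>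
  if h : IsPos p (c y.1) then ⟨c y.1, h⟩ else ⟨-(c y.1), (hc y).resolve_left h⟩

lemma recoverFun_pos (c : Perm (ZMod p)) (hc) (y : Pos p) (h : IsPos p (c y.1)) :
    recoverFun p c hc y = ⟨c y.1, h⟩ := dif_pos h

lemma recoverFun_neg (c : Perm (ZMod p)) (hc) (y : Pos p) (h : ¬ IsPos p (c y.1)) :
    recoverFun p c hc y = ⟨-(c y.1), (hc y).resolve_left h⟩ := dif_neg h

/-- Odd permutations of `ZMod p`. -/
def OddPerm := {c : Perm (ZMod p) // ∀ x, c (-x) = -(c x)}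

lemma two_ne_zero'' (hp : 5 ≤ p) : (2 : ZMod p) ≠ 0 := by
  intro hy
  rw [show (2 : ZMod p) = ((2 : ℕ) : ZMod p) by norm_cast,
    ZMod.natCast_eq_zero_iff] at hy
  have := Nat.le_of_dvd (by norm_num) hy
  omega

lemma eq_zero_of_two_mul (hp : 5 ≤ p) {t : ZMod p} (h : (2 : ZMod p) * t = 0) : t = 0 := by
  rcases mul_eq_zero.mp h with h | h
  · exact absurd h (two_ne_zero'' p hp)
  · exact h

lemma eq_zero_of_neg_eq_self (hp : 5 ≤ p) {t : ZMod p} (h : -t = t) : t = 0 := by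
  apply eq_zero_of_two_mul p hp
  rw [two_mul]
  nth_rewrite 1 [← h]
  rw [neg_add_cancel]

lemma card_oddPerm (hp : 5 ≤ p) :
    Nat.card (OddPerm p) = 2 ^ ((p - 1) / 2) * Nat.factorial ((p - 1) / 2) := by
  classical
  unfold OddPerm
  have hbij : Function.Bijective
      (fun gs : Perm (Pos p) × (Pos p → Bool) =>
        (⟨buildPerm p hp gs.1 gs.2, buildFun_odd p hp gs.1 gs.2⟩ :
          {c : Perm (ZMod p) // ∀ x, c (-x) = -(c x)})) := by
    constructor
    · rintro ⟨g, s⟩ ⟨g', s'⟩ hEq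
      have hfun : ∀ x, buildFun p g s x = buildFun p g' s' x := by
        intro x
        have := congrArg (fun c : {c : Perm (ZMod p) // ∀ x, c (-x) = -(c x)} => c.1 x) hEq
        simpa [buildPerm_apply] using this
      have key : ∀ y : Pos p, g y = g' y ∧ s y = s' y := by
        intro y
        have h1 := hfun y.1
        rw [buildFun_pos p g s y.2, buildFun_pos p g' s' y.2] at h1
        have he : (⟨y.1, y.2⟩ : Pos p) = y := rfl
        rw [he] at h1
        exact signed_inj p hp h1
      rw [Prod.mk.injEq]
      exact ⟨Equiv.ext fun y => (key y).1, funext fun y => (key y).2⟩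
    · rintro ⟨c, hodd⟩
      have hc0 : c 0 = 0 := by
        have h := hodd 0
        rw [neg_zero] at h
        exact eq_zero_of_neg_eq_self p hp h.symm
      have hcpos : ∀ y : Pos p, IsPos p (c y.1) ∨ IsPos p (-(c y.1)) := by
        intro y
        rcases trichotomy p hp (c y.1) with h | h | h
        · exact absurd (c.injective (h.trans hc0.symm)) (isPos_ne_zero p y.2)
        · exact Or.inl h
        · exact Or.inr h
      have hginj : Function.Injective (recoverFun p c hcpos) := by
        intro y y' h
        by_cases h1 : IsPos p (c y.1) <;> by_cases h2 : IsPos p (c y'.1)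
        · rw [recoverFun_pos p c hcpos y h1, recoverFun_pos p c hcpos y' h2] at h
          have hval : c y.1 = c y'.1 := congrArg Subtype.val h
          exact Subtype.ext (c.injective hval)
        · rw [recoverFun_pos p c hcpos y h1, recoverFun_neg p c hcpos y' h2] at h
          have hval : c y.1 = -(c y'.1) := congrArg Subtype.val h
          rw [← hodd y'.1] at hval
          have hyy := c.injective hval
          exfalso
          have : IsPos p (-y'.1) := by rw [← hyy]; exact y.2
          exact not_isPos_neg p hp y'.2 this
        · rw [recoverFun_neg p c hcpos y h1, recoverFun_pos p c hcpos y' h2] at h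
          have hval : -(c y.1) = c y'.1 := congrArg Subtype.val h
          rw [← hodd y.1] at hval
          have hyy := c.injective hval
          exfalso
          have : IsPos p (-y.1) := by rw [hyy]; exact y'.2
          exact not_isPos_neg p hp y.2 this
        · rw [recoverFun_neg p c hcpos y h1, recoverFun_neg p c hcpos y' h2] at h
          have hval : -(c y.1) = -(c y'.1) := congrArg Subtype.val h
          exact Subtype.ext (c.injective (neg_injective hval))
      set g : Perm (Pos p) := Equiv.ofBijective (recoverFun p c hcpos)
        ((Finite.injective_iff_bijective).mp hginj) with hg
      have hgapp : ∀ y, g y = recoverFun p c hcpos y := fun y => rfl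
      refine ⟨⟨g, fun y => decide (IsPos p (c y.1))⟩, ?_⟩
      apply Subtype.ext
      apply Equiv.ext
      intro x
      have hposcase : ∀ z : ZMod p, (hz : IsPos p z) → buildPerm p hp g
          (fun y => decide (IsPos p (c y.1))) z = c z := by
        intro z hz
        rw [buildPerm_apply, buildFun_pos p g _ hz, hgapp]
        by_cases h1 : IsPos p (c z)
        · rw [recoverFun_pos p c hcpos ⟨z, hz⟩ h1]
          show signed p ⟨c z, h1⟩ (decide (IsPos p (c z))) = c z
          rw [decide_eq_true h1]
          rfl
        · rw [recoverFun_neg p c hcpos ⟨z, hz⟩ h1]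
          show signed p ⟨-(c z), _⟩ (decide (IsPos p (c z))) = c z
          rw [decide_eq_false h1]
          show -(-(c z)) = c z
          rw [neg_neg]
      rcases trichotomy p hp x with h | h | h
      · rw [h, hc0]; exact buildFun_zero p g _
      · exact hposcase x h
      · have hx : x = -(-x) := (neg_neg x).symm
        rw [hx, buildPerm_apply, buildFun_odd p hp, ← buildPerm_apply p hp,
          hposcase (-x) h, hodd, neg_neg, neg_neg]
  have hcards := Nat.card_eq_of_bijective _ hbij
  rw [← hcards, Nat.card_prod, Nat.card_eq_fintype_card, Nat.card_eq_fintype_card,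
    Fintype.card_perm, Fintype.card_fun, Fintype.card_bool,
    ← Nat.card_eq_fintype_card, card_pos p hp, mul_comm]


-- ### Part B : reflection/rotation algebra and the conjugacy parametrization

lemma reflAt_zero_apply (x : ZMod p) : reflAt p 0 x = -x := by
  simp [reflAt]

lemma reflAt_mul_self : reflAt p 0 * reflAt p 0 = 1 := by
  ext x
  simp [reflAt, Perm.mul_apply]

lemma reflAt_inv : (reflAt p 0)⁻¹ = reflAt p 0 :=
  inv_eq_of_mul_eq_one_right (reflAt_mul_self p)

lemma rot_apply (r x : ZMod p) : rot p r x = r + x := rfl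

lemma rot_pow (n : ℕ) : rot p 1 ^ n = rot p ((n : ℕ) : ZMod p) := by
  induction n with
  | zero => rw [pow_zero, Nat.cast_zero, rot_zero]
  | succ n ih =>
    rw [pow_succ, ih, ← rot_add]
    push_cast
    ring_nf

lemma isHC_rot_one : IsHC p (rot p 1) := by
  constructor
  · refine ⟨0, ?_, ?_⟩
    · show rot p 1 0 ≠ 0
      rw [rot_apply, add_zero]
      exact one_ne_zero
    · intro y _
      refine ⟨(y.val : ℤ), ?_⟩
      rw [zpow_natCast, rot_pow, rot_apply, add_zero]
      exact ZMod.natCast_rightInverse y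
  · apply Finset.eq_univ_iff_forall.mpr
    intro x
    apply Perm.mem_support.mpr
    rw [rot_apply]
    intro h
    exact one_ne_zero (add_eq_right.mp h)

lemma isHC_conj {σ : Perm (ZMod p)} (h : IsHC p σ) (g : Perm (ZMod p)) :
    IsHC p (g * σ * g⁻¹) := by
  refine ⟨h.1.conj, ?_⟩
  rw [Perm.support_conj, h.2, Finset.map_univ_equiv]

lemma eq_rot_of_commute_rot {g : Perm (ZMod p)} (h : g * rot p 1 = rot p 1 * g) :
    g = rot p (g 0) := by
  have hstep : ∀ x : ZMod p, g (1 + x) = 1 + g x := by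
    intro x
    have h2 := congrArg (fun σ : Perm (ZMod p) => σ x) h
    simpa [Perm.mul_apply, rot_apply] using h2
  have key : ∀ n : ℕ, g ((n : ℕ) : ZMod p) = g 0 + ((n : ℕ) : ZMod p) := by
    intro n
    induction n with
    | zero => rw [Nat.cast_zero, add_zero]
    | succ n ih =>
      push_cast
      rw [add_comm (n : ZMod p) 1, hstep, ih]
      ring
  ext x
  have hx : ((x.val : ℕ) : ZMod p) = x := ZMod.natCast_rightInverse x
  rw [rot_apply]
  calc g x = g ((x.val : ℕ) : ZMod p) := by rw [hx]
    _ = g 0 + ((x.val : ℕ) : ZMod p) := key x.val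
    _ = g 0 + x := by rw [hx]

lemma refl_rot : reflAt p 0 * rot p 1 * reflAt p 0 = (rot p 1)⁻¹ := by
  apply eq_inv_of_mul_eq_one_left
  ext x
  show reflAt p 0 (rot p 1 (reflAt p 0 (rot p 1 x))) = x
  rw [rot_apply, reflAt_zero_apply, rot_apply, reflAt_zero_apply]
  ring

lemma rot_mul_refl (r : ZMod p) :
    rot p r * reflAt p 0 = reflAt p 0 * rot p (-r) := by
  ext x
  show rot p r (reflAt p 0 x) = reflAt p 0 (rot p (-r) x)
  rw [rot_apply, reflAt_zero_apply, reflAt_zero_apply, rot_apply]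
  ring

lemma odd_of_comm {c : Perm (ZMod p)} (h : reflAt p 0 * c = c * reflAt p 0) :
    ∀ x, c (-x) = -(c x) := by
  intro x
  have h2 := congrArg (fun σ : Perm (ZMod p) => σ x) h
  simpa [Perm.mul_apply, reflAt_zero_apply] using h2.symm

lemma comm_of_odd {c : Perm (ZMod p)} (h : ∀ x, c (-x) = -(c x)) :
    reflAt p 0 * c = c * reflAt p 0 := by
  ext x
  show reflAt p 0 (c x) = c (reflAt p 0 x)
  rw [reflAt_zero_apply, reflAt_zero_apply, h]

lemma comm_inv_of_odd {c : Perm (ZMod p)} (h : ∀ x, c (-x) = -(c x)) :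
    reflAt p 0 * c⁻¹ = c⁻¹ * reflAt p 0 := by
  have h1 := comm_of_odd p h
  calc reflAt p 0 * c⁻¹ = c⁻¹ * (c * reflAt p 0) * c⁻¹ := by group
    _ = c⁻¹ * (reflAt p 0 * c) * c⁻¹ := by rw [h1]
    _ = c⁻¹ * reflAt p 0 := by group

lemma card_dirFixed (hp : 5 ≤ p) :
    Nat.card {σ : Perm (ZMod p) //
        IsHC p σ ∧ reflAt p 0 * σ * reflAt p 0 = σ⁻¹}
      = 2 ^ ((p - 1) / 2) * Nat.factorial ((p - 1) / 2) := by
  rw [← card_oddPerm p hp]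
  apply (Nat.card_eq_of_bijective (fun c : OddPerm p =>
    (⟨c.1 * rot p 1 * c.1⁻¹, isHC_conj p (isHC_rot_one p) c.1, by
      have hc := comm_of_odd p c.2
      have hc' := comm_inv_of_odd p c.2
      calc reflAt p 0 * (c.1 * rot p 1 * c.1⁻¹) * reflAt p 0
          = (reflAt p 0 * c.1) * rot p 1 * (c.1⁻¹ * reflAt p 0) := by group
        _ = (c.1 * reflAt p 0) * rot p 1 * (reflAt p 0 * c.1⁻¹) := by rw [hc, ← hc']
        _ = c.1 * (reflAt p 0 * rot p 1 * reflAt p 0) * c.1⁻¹ := by group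
        _ = c.1 * (rot p 1)⁻¹ * c.1⁻¹ := by rw [refl_rot]
        _ = (c.1 * rot p 1 * c.1⁻¹)⁻¹ := by group⟩ :
      {σ : Perm (ZMod p) // IsHC p σ ∧ reflAt p 0 * σ * reflAt p 0 = σ⁻¹})) ?_).symm
  constructor
  · rintro ⟨c, hcodd⟩ ⟨c', hcodd'⟩ hEq
    have hEq2 : c * rot p 1 * c⁻¹ = c' * rot p 1 * c'⁻¹ := by
      exact congrArg Subtype.val hEq
    have hcomm : (c⁻¹ * c') * rot p 1 = rot p 1 * (c⁻¹ * c') := by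
      calc (c⁻¹ * c') * rot p 1 = c⁻¹ * (c' * rot p 1 * c'⁻¹) * c' := by group
        _ = c⁻¹ * (c * rot p 1 * c⁻¹) * c' := by rw [hEq2]
        _ = rot p 1 * (c⁻¹ * c') := by group
    have hd := eq_rot_of_commute_rot p hcomm
    set t : ZMod p := (c⁻¹ * c') 0 with ht
    have hdR : (c⁻¹ * c') * reflAt p 0 = reflAt p 0 * (c⁻¹ * c') := by
      have h1 := comm_of_odd p hcodd'
      have h2 := comm_inv_of_odd p hcodd
      calc (c⁻¹ * c') * reflAt p 0 = c⁻¹ * (c' * reflAt p 0) := by group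
        _ = c⁻¹ * (reflAt p 0 * c') := by rw [h1]
        _ = (c⁻¹ * reflAt p 0) * c' := by group
        _ = reflAt p 0 * (c⁻¹ * c') := by rw [← h2]; group
    rw [hd] at hdR
    have happ := congrArg (fun σ : Perm (ZMod p) => σ 0) hdR
    have ht0 : -t = t := by
      simpa [Perm.mul_apply, rot_apply, reflAt_zero_apply] using happ.symm
    have htz : t = 0 := eq_zero_of_neg_eq_self p hp ht0
    have hone : c⁻¹ * c' = 1 := by rw [hd, htz, rot_zero]
    apply Subtype.ext
    calc c = c * (c⁻¹ * c') := by rw [hone, mul_one]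
      _ = c' := by group
  · rintro ⟨σ, hHC, hQ⟩
    have hconj : IsConj (rot p 1) σ :=
      (isHC_rot_one p).1.isConj hHC.1 (by rw [(isHC_rot_one p).2, hHC.2])
    obtain ⟨d, hd⟩ := isConj_iff.mp hconj
    rw [← hd] at hQ
    have E : (reflAt p 0 * d) * rot p 1 * (reflAt p 0 * d)⁻¹
        = (d * reflAt p 0) * rot p 1 * (d * reflAt p 0)⁻¹ := by
      calc (reflAt p 0 * d) * rot p 1 * (reflAt p 0 * d)⁻¹
          = reflAt p 0 * (d * rot p 1 * d⁻¹) * (reflAt p 0)⁻¹ := by group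
        _ = reflAt p 0 * (d * rot p 1 * d⁻¹) * reflAt p 0 := by rw [reflAt_inv]
        _ = (d * rot p 1 * d⁻¹)⁻¹ := hQ
        _ = d * (rot p 1)⁻¹ * d⁻¹ := by group
        _ = d * (reflAt p 0 * rot p 1 * reflAt p 0) * d⁻¹ := by rw [refl_rot]
        _ = d * (reflAt p 0 * rot p 1 * (reflAt p 0)⁻¹) * d⁻¹ := by rw [reflAt_inv]
        _ = (d * reflAt p 0) * rot p 1 * (d * reflAt p 0)⁻¹ := by group
    set u : Perm (ZMod p) := (d * reflAt p 0)⁻¹ * (reflAt p 0 * d) with hu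
    have hucomm : u * rot p 1 = rot p 1 * u := by
      calc u * rot p 1
          = (d * reflAt p 0)⁻¹ * ((reflAt p 0 * d) * rot p 1 * (reflAt p 0 * d)⁻¹)
            * (reflAt p 0 * d) := by rw [hu]; group
        _ = (d * reflAt p 0)⁻¹ * ((d * reflAt p 0) * rot p 1 * (d * reflAt p 0)⁻¹)
            * (reflAt p 0 * d) := by rw [E]
        _ = rot p 1 * u := by rw [hu]; group
    have hut := eq_rot_of_commute_rot p hucomm
    set t : ZMod p := u 0 with ht
    have hRd : reflAt p 0 * d = d * reflAt p 0 * rot p t := by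
      calc reflAt p 0 * d = (d * reflAt p 0) * u := by rw [hu]; group
        _ = d * reflAt p 0 * rot p t := by rw [hut]
    have h2 : (2 : ZMod p) * (2 : ZMod p)⁻¹ = 1 := mul_inv_cancel₀ (two_ne_zero'' p hp)
    set v : ZMod p := -((2 : ZMod p)⁻¹ * t) with hv
    have hvt : t + v = -v := by
      rw [hv]
      have : t = (2 : ZMod p) * ((2 : ZMod p)⁻¹ * t) := by rw [← mul_assoc, h2, one_mul]
      nth_rewrite 1 [this]
      ring
    set c : Perm (ZMod p) := d * rot p v with hc
    have hcomm : reflAt p 0 * c = c * reflAt p 0 := by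
      calc reflAt p 0 * c = (reflAt p 0 * d) * rot p v := by rw [hc]; group
        _ = d * reflAt p 0 * rot p t * rot p v := by rw [hRd]
        _ = d * (reflAt p 0 * rot p (t + v)) := by rw [rot_add]; group
        _ = d * (reflAt p 0 * rot p (-v)) := by rw [hvt]
        _ = d * (rot p v * reflAt p 0) := by rw [rot_mul_refl]
        _ = c * reflAt p 0 := by rw [hc]; group
    have hrotv : rot p v * rot p 1 * (rot p v)⁻¹ = rot p 1 := by
      have : rot p v * rot p 1 = rot p 1 * rot p v := by
        rw [← rot_add, ← rot_add, add_comm]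
      rw [this]
      group
    refine ⟨⟨c, odd_of_comm p hcomm⟩, ?_⟩
    apply Subtype.ext
    show c * rot p 1 * c⁻¹ = σ
    rw [← hd, hc]
    calc d * rot p v * rot p 1 * (d * rot p v)⁻¹
        = d * (rot p v * rot p 1 * (rot p v)⁻¹) * d⁻¹ := by group
      _ = d * rot p 1 * d⁻¹ := by rw [hrotv]

-- ### Part C/D : from directed fixed cycles to undirected ones

lemma Q_conj_inv {f : Perm (ZMod p)} (h : reflAt p 0 * f * reflAt p 0 = f⁻¹) :
    reflAt p 0 * f⁻¹ * reflAt p 0 = f := by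
  have h2 := congrArg Inv.inv h
  rw [mul_inv_rev, mul_inv_rev, reflAt_inv, inv_inv, ← mul_assoc] at h2
  exact h2

/-- The reversal of a Hamiltonian cycle. -/
def hcInv (σ : HC p) : HC p :=
  ⟨σ.1⁻¹, σ.2.1.inv, by rw [Perm.support_inv]; exact σ.2.2⟩

lemma hc_zero_ne (σ : HC p) : σ.1 0 ≠ 0 := by
  apply Perm.mem_support.mp
  rw [σ.2.2]
  exact Finset.mem_univ 0

lemma hc_ne_inv (hp : 5 ≤ p) (σ : HC p) : σ.1 ≠ σ.1⁻¹ := by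
  intro h
  have h2 : σ.1 ^ 2 = 1 := by
    rw [sq]
    nth_rewrite 2 [h]
    group
  have hord : orderOf σ.1 = p := by
    rw [σ.2.1.orderOf, σ.2.2, Finset.card_univ, ZMod.card]
  have hdvd : orderOf σ.1 ∣ 2 := orderOf_dvd_of_pow_eq_one h2
  rw [hord] at hdvd
  have := Nat.le_of_dvd (by norm_num) hdvd
  omega

lemma q_of_fixedBy (hp : 5 ≤ p) (σ : HC p) (hfix : FixedBy p (reflAt p 0) σ.1) :
    reflAt p 0 * σ.1 * reflAt p 0 = σ.1⁻¹ := by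
  rcases hfix with h | h
  · exfalso
    rw [reflAt_inv] at h
    have hcomm : reflAt p 0 * σ.1 = σ.1 * reflAt p 0 := by
      calc reflAt p 0 * σ.1
          = (reflAt p 0 * σ.1 * reflAt p 0) * reflAt p 0 := by
            rw [mul_assoc, mul_assoc, reflAt_mul_self, mul_one]
        _ = σ.1 * reflAt p 0 := by rw [h]
    have happ := congrArg (fun τ : Perm (ZMod p) => τ 0) hcomm
    simp only [Perm.mul_apply, reflAt_zero_apply, neg_zero] at happ
    exact hc_zero_ne p σ (eq_zero_of_neg_eq_self p hp happ)
  · rw [reflAt_inv] at h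
    exact h

lemma q_of_rel (σ τ : HC p) (hrel : τ.1 = σ.1 ∨ τ.1 = σ.1⁻¹)
    (hQ : reflAt p 0 * σ.1 * reflAt p 0 = σ.1⁻¹) :
    reflAt p 0 * τ.1 * reflAt p 0 = τ.1⁻¹ := by
  rcases hrel with h | h
  · rw [h]; exact hQ
  · rw [h]
    rw [Q_conj_inv p hQ, inv_inv]

open scoped Classical in
/-- Splitting the directed symmetric Hamiltonian cycles into undirected ones with
an orientation bit. -/
noncomputable def halfEquiv (hp : 5 ≤ p) :
    {σ : HC p // reflAt p 0 * σ.1 * reflAt p 0 = σ.1⁻¹} ≃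
      {u : UCyc p // ∃ σ : HC p, Quotient.mk (revSetoid p) σ = u ∧
        FixedBy p (reflAt p 0) σ.1} × Bool where
  toFun σ := (⟨Quotient.mk (revSetoid p) σ.1, σ.1, rfl,
      Or.inr (by rw [reflAt_inv]; exact σ.2)⟩,
    if σ.1.1 = (Quotient.out (Quotient.mk (revSetoid p) σ.1)).1 then true else false)
  invFun ub :=
    cond ub.2
      ⟨Quotient.out (ub.1.1 : Quotient (revSetoid p)), by
        obtain ⟨τ, hτ, hfix⟩ := ub.1.2
        have hQτ := q_of_fixedBy p hp τ hfix
        have hmk : Quotient.mk (revSetoid p) (Quotient.out (ub.1.1 : Quotient (revSetoid p)))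
            = Quotient.mk (revSetoid p) τ := by
          exact (Quotient.out_eq _).trans hτ.symm
        exact q_of_rel p τ _ (Quotient.exact hmk.symm) hQτ⟩
      ⟨hcInv p (Quotient.out (ub.1.1 : Quotient (revSetoid p))), by
        obtain ⟨τ, hτ, hfix⟩ := ub.1.2
        have hQτ := q_of_fixedBy p hp τ hfix
        have hmk : Quotient.mk (revSetoid p) (Quotient.out (ub.1.1 : Quotient (revSetoid p)))
            = Quotient.mk (revSetoid p) τ := by
          exact (Quotient.out_eq _).trans hτ.symm
        have hout := q_of_rel p τ _ (Quotient.exact hmk.symm) hQτ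
        show reflAt p 0 * (Quotient.out (ub.1.1 : Quotient (revSetoid p))).1⁻¹ * reflAt p 0
            = ((Quotient.out (ub.1.1 : Quotient (revSetoid p))).1⁻¹)⁻¹
        rw [inv_inv]
        exact Q_conj_inv p hout⟩
  left_inv := by
    rintro ⟨σ, hσ⟩
    have hmk : Quotient.mk (revSetoid p)
        (Quotient.out (Quotient.mk (revSetoid p) σ : Quotient (revSetoid p)))
        = Quotient.mk (revSetoid p) σ := Quotient.out_eq _
    have hrel := Quotient.exact hmk
    rcases hrel with h | h
    · have hcond : σ.1 = (Quotient.out (Quotient.mk (revSetoid p) σ :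
          Quotient (revSetoid p))).1 := h
      simp only [hcond, if_pos rfl]
      apply Subtype.ext
      apply Subtype.ext
      first
      | exact hcond
      | exact hcond.symm
    · have hne : σ.1 ≠ (Quotient.out (Quotient.mk (revSetoid p) σ :
          Quotient (revSetoid p))).1 := by
        intro he
        have : σ.1 = σ.1⁻¹ := by
          nth_rewrite 2 [he]
          rw [h]
        exact hc_ne_inv p hp σ this
      simp only [if_neg hne, Bool.cond_false]
      apply Subtype.ext
      apply Subtype.ext
      first
      | exact h
      | exact h.symm
      | · show (Quotient.out (Quotient.mk (revSetoid p) σ : Quotient (revSetoid p))).1⁻¹ = σ.1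
          rw [← h, inv_inv]
  right_inv := by
    rintro ⟨u, b⟩
    rcases b with _ | _
    · dsimp only [Bool.cond_false]
      have hmk : Quotient.mk (revSetoid p)
          (hcInv p (Quotient.out (u.1 : Quotient (revSetoid p)))) = u.1 := by
        have hs : Quotient.mk (revSetoid p)
            (hcInv p (Quotient.out (u.1 : Quotient (revSetoid p))))
            = Quotient.mk (revSetoid p) (Quotient.out (u.1 : Quotient (revSetoid p))) := by
          apply Quotient.sound
          right
          exact (inv_inv _).symm
        rw [hs]; exact Quotient.out_eq _
      refine Prod.ext (Subtype.ext hmk) ?_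
      refine if_neg ?_
      intro he
      change (hcInv p (Quotient.out (u.1 : Quotient (revSetoid p)))).1 = (Quotient.out (Quotient.mk (revSetoid p) (hcInv p (Quotient.out (u.1 : Quotient (revSetoid p)))))).1 at he
      rw [hmk] at he
      have he2 : (Quotient.out (u.1 : Quotient (revSetoid p))).1⁻¹
          = (Quotient.out (u.1 : Quotient (revSetoid p))).1 := he
      exact hc_ne_inv p hp _ he2.symm
    · dsimp only [Bool.cond_true]
      have hmk : Quotient.mk (revSetoid p)
          (Quotient.out (u.1 : Quotient (revSetoid p))) = u.1 := Quotient.out_eq _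
      refine Prod.ext (Subtype.ext hmk) ?_
      refine if_pos ?_
      change (Quotient.out (u.1 : Quotient (revSetoid p))).1 = (Quotient.out (Quotient.mk (revSetoid p) (Quotient.out (u.1 : Quotient (revSetoid p))))).1
      rw [hmk]

/-- Flattening the double subtype. -/
def flatten : {σ : HC p // reflAt p 0 * σ.1 * reflAt p 0 = σ.1⁻¹} ≃
    {σ : Perm (ZMod p) // IsHC p σ ∧ reflAt p 0 * σ * reflAt p 0 = σ⁻¹} where
  toFun x := ⟨x.1.1, x.1.2, x.2⟩
  invFun y := ⟨⟨y.1, y.2.1⟩, y.2.2⟩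
  left_inv x := rfl
  right_inv y := rfl

end Stmt4Aux

end Stmt4AuxSection

/-- the number of undirected Hamiltonian cycles on `ZMod p` invariant
under the reflection `k ↦ -k` equals `((p-1)/2) · 2^((p-3)/2) · ((p-3)/2)!`. -/
theorem stmt4 (p : ℕ) [Fact p.Prime] (hp : 5 ≤ p) :
    Nat.card {u : UCyc p // ∃ σ : HC p, Quotient.mk (revSetoid p) σ = u ∧
        FixedBy p (reflAt p 0) σ.1}
      = (p - 1) / 2 * 2 ^ ((p - 3) / 2) * Nat.factorial ((p - 3) / 2) := by
  have h1 : Nat.card {σ : HC p // reflAt p 0 * σ.1 * reflAt p 0 = σ.1⁻¹}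
      = 2 ^ ((p - 1) / 2) * Nat.factorial ((p - 1) / 2) := by
    rw [Nat.card_congr (Stmt4Aux.flatten p), Stmt4Aux.card_dirFixed p hp]
  have h2 : Nat.card {σ : HC p // reflAt p 0 * σ.1 * reflAt p 0 = σ.1⁻¹}
      = Nat.card {u : UCyc p // ∃ σ : HC p, Quotient.mk (revSetoid p) σ = u ∧
          FixedBy p (reflAt p 0) σ.1} * 2 := by
    rw [Nat.card_congr (Stmt4Aux.halfEquiv p hp), Nat.card_prod,
      Nat.card_eq_fintype_card (α := Bool), Fintype.card_bool]
  have hodd := Stmt4Aux.p_odd p hp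
  have hm : (p - 1) / 2 = (p - 3) / 2 + 1 := by omega
  have key : Nat.card {u : UCyc p // ∃ σ : HC p, Quotient.mk (revSetoid p) σ = u ∧
      FixedBy p (reflAt p 0) σ.1} * 2
      = ((p - 1) / 2 * 2 ^ ((p - 3) / 2) * Nat.factorial ((p - 3) / 2)) * 2 := by
    rw [← h2, h1, hm, Nat.factorial_succ, pow_succ]
    ring
  omega
end

section
/- For a prime p ≥ 5, the number of equivalence classes up to rotation of Hamiltonian cycles on Z/p that have at least one axis of reflective symmetry equals ((p-1)/2) · 2^((p-3)/2) · ((p-3)/2)!. -/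
open Equiv
set_option linter.unusedSectionVars false

variable (p : ℕ) [NeZero p]

/-!
Write `ν` for the reflection `k ↦ -k` and `ρ` for the rotation `k ↦ k + 1`. Rotating an axis of
symmetry to `0`, every rotation class with an axis contains a directed cycle `σ` reversed by `ν`
(`ν σ ν = σ⁻¹`); any other such representative is `σ` or `σ⁻¹`, because if `σ` and a rotation of
`σ` by `c` are both reversed by `ν`, then `σ` commutes with the rotation by `2c`, hence (`p` odd)
with the rotation by `c`. So the classes are counted by half the number of Hamiltonian cycles
reversed by `ν`. These are exactly the conjugates `f ρ f⁻¹` with `f` in the centralizer of `ν`, each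
obtained once, and `ν` is a product of `m = (p - 1) / 2` disjoint transpositions, so its
centralizer has order `2 ^ m * m!`.
-/

open Subgroup

section Reversal

variable {G : Type*} [Group G]

theorem conj_reverses_conj_iff (h g σ : G) :
    h * g * h⁻¹ * (h * σ * h⁻¹) * (h * g * h⁻¹)⁻¹ = (h * σ * h⁻¹)⁻¹ ↔ g * σ * g⁻¹ = σ⁻¹ := by
  simp only [← MulAut.conj_apply, ← map_mul, ← map_inv, (MulAut.conj h).injective.eq_iff]

theorem reverses_inv {g σ : G} (h : g * σ * g⁻¹ = σ⁻¹) : g * σ⁻¹ * g⁻¹ = σ⁻¹⁻¹ := by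
  simpa [mul_assoc] using congrArg (·⁻¹) h

theorem commute_of_reverses {g₁ g₂ σ : G} (h₁ : g₁ * σ * g₁⁻¹ = σ⁻¹)
    (h₂ : g₂ * σ * g₂⁻¹ = σ⁻¹) : Commute (g₂⁻¹ * g₁) σ :=
  calc g₂⁻¹ * g₁ * σ = g₂⁻¹ * (g₁ * σ * g₁⁻¹) * g₁ := by group
    _ = g₂⁻¹ * (g₂ * σ * g₂⁻¹) * g₁ := by rw [h₁, h₂]
    _ = σ * (g₂⁻¹ * g₁) := by group

end Reversal

theorem Equiv.Perm.IsCycle.eq_one_of_commute_of_apply_eq {α : Type*} {σ g : Perm α}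
    (hσ : σ.IsCycle) (hfull : ∀ y, σ y ≠ y) (hg : Commute g σ) {x : α} (hx : g x = x) :
    g = 1 := by
  ext y
  obtain ⟨i, rfl⟩ := hσ.exists_zpow_eq (hfull x) (hfull y)
  change (g * σ ^ i) x = (σ ^ i) x
  rw [(hg.zpow_right i).eq, Perm.mul_apply, hx]

theorem Nat.card_eq_two_mul_of_fiber_eq_pair {α β : Type*} [Finite α] {f : α → β}
    (hf : Function.Surjective f) {ι : α → α} (hι : ∀ a, ι a ≠ a)
    (hfib : ∀ a b, f b = f a ↔ b = a ∨ b = ι a) : Nat.card α = 2 * Nat.card β := by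
  have : Finite β := Finite.of_surjective f hf
  have : Fintype β := Fintype.ofFinite β
  have hfiber : ∀ b, Nat.card {a // f a = b} = 2 := by
    intro b
    obtain ⟨a, rfl⟩ := hf b
    rw [← Set.ncard_pair (hι a).symm, ← _root_.Nat.card_coe_set_eq]
    exact Nat.card_congr (Equiv.subtypeEquivRight fun x => (hfib a x).trans (by simp))
  rw [← Nat.card_congr (Equiv.sigmaFiberEquiv f), Nat.card_sigma]
  simp [hfiber, mul_comm]

theorem ZMod.half_nsmul_add_self {p : ℕ} (hp : Odd p) (c : ZMod p) :
    ((p + 1) / 2) • (c + c) = c := by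
  obtain ⟨k, rfl⟩ := hp
  rw [← two_nsmul, smul_smul, show (2 * k + 1 + 1) / 2 * 2 = (2 * k + 1) + 1 by omega,
    add_nsmul, one_nsmul, nsmul_eq_mul, ZMod.natCast_self, zero_mul, zero_add]

theorem ZMod.add_self_eq_zero_iff {p : ℕ} (hp : Odd p) {x : ZMod p} : x + x = 0 ↔ x = 0 :=
  ⟨fun h => by rw [← ZMod.half_nsmul_add_self hp x, h, nsmul_zero], fun h => by rw [h, add_zero]⟩

section Cycles

variable {p}

theorem rot_apply (r x : ZMod p) : rot p r x = r + x := rfl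

theorem reflAt_apply (s x : ZMod p) : reflAt p s x = s - x := rfl

theorem reflAt_inv (s : ZMod p) : (reflAt p s)⁻¹ = reflAt p s := by
  ext x
  simp [reflAt, Perm.inv_def, neg_add_eq_sub]

theorem rot_pow (c : ZMod p) (n : ℕ) : rot p c ^ n = rot p (n • c) := by
  induction n with
  | zero => rw [pow_zero, zero_nsmul, rot_zero]
  | succ n ih => rw [pow_succ, ih, succ_nsmul, rot_add]

theorem rot_conj_reflAt (c s : ZMod p) :
    rot p c * reflAt p s * (rot p c)⁻¹ = reflAt p (s + c + c) := by
  ext x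
  simp only [← rot_neg, Perm.mul_apply, rot_apply, reflAt_apply]
  ring

theorem reflAt_inv_mul_reflAt (s t : ZMod p) : (reflAt p s)⁻¹ * reflAt p t = rot p (s - t) := by
  ext x
  simp only [reflAt_inv, Perm.mul_apply, rot_apply, reflAt_apply]
  ring

theorem reflAt_conj_rot (s c : ZMod p) : reflAt p s * rot p c * (reflAt p s)⁻¹ = (rot p c)⁻¹ := by
  ext x
  simp only [reflAt_inv, ← rot_neg, Perm.mul_apply, rot_apply, reflAt_apply]
  ring

theorem apply_zero_of_commute_reflAt (hp : Odd p) {f : Perm (ZMod p)}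
    (hf : Commute f (reflAt p 0)) : f 0 = 0 := by
  have h := congrArg (· 0) hf.eq
  simp only [Perm.mul_apply, reflAt_apply, sub_zero, zero_sub] at h
  rw [← ZMod.add_self_eq_zero_iff hp, ← sub_neg_eq_add, ← h, sub_self]

theorem IsHC.apply_ne {σ : Perm (ZMod p)} (hσ : IsHC p σ) (x : ZMod p) : σ x ≠ x :=
  Perm.mem_support.mp (hσ.2 ▸ Finset.mem_univ x)

theorem IsHC.orderOf_eq {σ : Perm (ZMod p)} (hσ : IsHC p σ) : orderOf σ = p := by
  rw [hσ.1.orderOf, hσ.2, Finset.card_univ, ZMod.card]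

theorem IsHC.pow_eq_pow_iff {σ : Perm (ZMod p)} (hσ : IsHC p σ) {a b : ℕ} :
    σ ^ a = σ ^ b ↔ (a : ZMod p) = b := by
  rw [pow_eq_pow_iff_modEq, hσ.orderOf_eq, ZMod.natCast_eq_natCast_iff]

theorem IsHC.inv {σ : Perm (ZMod p)} (hσ : IsHC p σ) : IsHC p σ⁻¹ :=
  ⟨hσ.1.inv, by rw [Perm.support_inv, hσ.2]⟩

theorem IsHC.conj {σ : Perm (ZMod p)} (hσ : IsHC p σ) (g : Perm (ZMod p)) :
    IsHC p (g * σ * g⁻¹) :=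
  ⟨hσ.1.conj, by rw [Perm.support_conj, hσ.2, Finset.map_univ_equiv]⟩

theorem IsHC.ne_inv (hp : 2 < p) {σ : Perm (ZMod p)} (hσ : IsHC p σ) : σ ≠ σ⁻¹ := by
  intro h
  have h2 : σ ^ 2 = 1 := by rw [sq, ← mul_inv_cancel σ, ← h]
  have := Nat.le_of_dvd two_pos (hσ.orderOf_eq ▸ orderOf_dvd_of_pow_eq_one h2)
  omega

theorem isHC_rot_one (hp : 1 < p) : IsHC p (rot p 1) := by
  have : Fact (1 < p) := ⟨hp⟩
  have hne : ∀ y : ZMod p, rot p 1 y ≠ y := by simp [rot_apply]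
  refine ⟨⟨0, hne 0, fun y _ => ⟨y.val, ?_⟩⟩, ?_⟩
  · rw [zpow_natCast, rot_pow, rot_apply, nsmul_one, ZMod.natCast_zmod_val, add_zero]
  · ext y
    simpa using hne y

end Cycles

section Symmetric

variable {p}

theorem IsHC.not_commute_reflAt (hp : Odd p) {σ : Perm (ZMod p)} (hσ : IsHC p σ) (s : ZMod p) :
    ¬ Commute (reflAt p s) σ := by
  have : Nontrivial (ZMod p) := nontrivial_of_ne _ _ (hσ.apply_ne 0)
  intro hcomm
  set c := ((p + 1) / 2) • s
  have hc : c + c = s := by rw [← nsmul_add, ZMod.half_nsmul_add_self hp]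
  have hrefl := hσ.1.eq_one_of_commute_of_apply_eq hσ.apply_ne hcomm
    (x := c) (by rw [reflAt_apply, ← hc, add_sub_cancel_right])
  -- `reflAt s` fixes the midpoint `c` of its axis, so it is trivial; but it moves `c + 1`
  have h := congrArg (· (c + 1)) hrefl
  simp only [reflAt_apply, Perm.one_apply, ← hc] at h
  have h2 : (1 : ZMod p) + 1 = 0 := by linear_combination -h
  exact one_ne_zero (by rw [← ZMod.half_nsmul_add_self hp 1, h2, nsmul_zero])

theorem exists_rotAct_reversed_of_fixedBy (hp : Odd p) {σ : Perm (ZMod p)} (hσ : IsHC p σ)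
    {s : ZMod p} (h : FixedBy p (reflAt p s) σ) :
    ∃ c, reflAt p 0 * rotAct p c σ * (reflAt p 0)⁻¹ = (rotAct p c σ)⁻¹ := by
  obtain hcomm | hrev := h
  · exact absurd (mul_inv_eq_iff_eq_mul.mp hcomm) (hσ.not_commute_reflAt hp s)
  set c := ((p + 1) / 2) • (-s)
  have hc : s + c + c = 0 := by
    rw [add_assoc, ← nsmul_add, ZMod.half_nsmul_add_self hp, add_neg_cancel]
  refine ⟨c, ?_⟩
  rw [← hc, ← rot_conj_reflAt, rotAct, conj_reverses_conj_iff]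
  exact hrev

theorem rotAct_eq_self_of_reversed (hp : Odd p) {σ : Perm (ZMod p)} {c : ZMod p}
    (h₀ : reflAt p 0 * σ * (reflAt p 0)⁻¹ = σ⁻¹)
    (hc : reflAt p 0 * rotAct p c σ * (reflAt p 0)⁻¹ = (rotAct p c σ)⁻¹) :
    rotAct p c σ = σ := by
  -- `σ` is reversed by the reflections in `0` and in `-2c`
  rw [show (0 : ZMod p) = -c - c + c + c by ring, ← rot_conj_reflAt, rotAct,
    conj_reverses_conj_iff] at hc
  have h2c : Commute (rot p (c + c)) σ := by
    simpa [reflAt_inv_mul_reflAt] using commute_of_reverses hc h₀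
  have hcomm : Commute (rot p c) σ := by
    simpa [rot_pow, ZMod.half_nsmul_add_self hp] using h2c.pow_left ((p + 1) / 2)
  rw [rotAct, hcomm.eq, mul_inv_cancel_right]

variable (p) in
def SymHC : Type := {σ : HC p // reflAt p 0 * σ.1 * (reflAt p 0)⁻¹ = σ.1⁻¹}

theorem SymHC.ext {σ τ : SymHC p} (h : σ.1.1 = τ.1.1) : σ = τ := Subtype.ext (Subtype.ext h)

def SymHC.inv (σ : SymHC p) : SymHC p := ⟨⟨σ.1.1⁻¹, σ.1.2.inv⟩, reverses_inv σ.2⟩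

theorem card_symHC_eq_two_mul_card_classes (hp : Odd p) (hp2 : 2 < p) :
    Nat.card (SymHC p) = 2 * Nat.card {q : RotClasses p // ∃ σ : HC p,
      Quotient.mk (rotSetoid p) σ = q ∧ ∃ s : ZMod p, FixedBy p (reflAt p s) σ.1} := by
  have : Finite (HC p) := inferInstanceAs (Finite {σ // IsHC p σ})
  have : Finite (SymHC p) := Subtype.finite
  refine Nat.card_eq_two_mul_of_fiber_eq_pair (ι := SymHC.inv)
    (f := fun σ => ⟨Quotient.mk _ σ.1, σ.1, rfl, 0, Or.inr σ.2⟩) ?_ ?_ ?_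
  · rintro ⟨q, σ, rfl, s, hs⟩
    obtain ⟨c, hc⟩ := exists_rotAct_reversed_of_fixedBy hp σ.2 hs
    refine ⟨⟨⟨rotAct p c σ.1, σ.2.conj _⟩, hc⟩, Subtype.ext (Quotient.sound ?_)⟩
    exact ⟨-c, Or.inl (rotAct_neg_cancel p c σ.1).symm⟩
  · intro σ h
    exact σ.1.2.ne_inv hp2 (congrArg (·.1.1) h).symm
  · intro σ τ
    rw [Subtype.ext_iff]
    change Quotient.mk (rotSetoid p) τ.1 = Quotient.mk _ σ.1 ↔ _
    rw [Quotient.eq]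
    constructor
    · rintro ⟨r, h | h⟩
      · have hrot := rotAct_eq_self_of_reversed hp τ.2 (h ▸ σ.2)
        exact Or.inl (SymHC.ext (h.trans hrot).symm)
      · have hinv : σ.1.1⁻¹ = rotAct p r τ.1.1 := by rw [h, inv_inv]
        have hrot := rotAct_eq_self_of_reversed hp τ.2 (hinv ▸ reverses_inv σ.2)
        exact Or.inr (SymHC.ext (hinv.trans hrot).symm)
    · rintro (rfl | rfl)
      · exact ⟨0, Or.inl (rotAct_zero p _).symm⟩
      · exact ⟨0, Or.inr (by rw [rotAct_zero]; rfl)⟩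

theorem card_centralizer_reflAt_zero (hp : Odd p) :
    Nat.card (centralizer {reflAt p 0}) = 2 ^ ((p - 1) / 2) * ((p - 1) / 2).factorial := by
  have hcycle : (reflAt p 0).cycleType = Multiset.replicate ((p - 1) / 2) 2 := by
    have hsupp : (reflAt p 0).support = Finset.univ.erase 0 := by
      ext x
      rw [Perm.mem_support, Finset.mem_erase, reflAt_apply, zero_sub, Ne, neg_eq_iff_add_eq_zero,
        ZMod.add_self_eq_zero_iff hp, and_iff_left (Finset.mem_univ x)]
    have hsq : reflAt p 0 ^ 2 = 1 := by rw [sq, mul_eq_one_iff_eq_inv, reflAt_inv]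
    have : Fact (Nat.Prime 2) := ⟨Nat.prime_two⟩
    have htype := Perm.cycleType_of_pow_prime_eq_one hsq
    have hsum := (reflAt p 0).sum_cycleType
    rw [hsupp, Finset.card_erase_of_mem (Finset.mem_univ _), Finset.card_univ, ZMod.card, htype,
      Multiset.sum_replicate, smul_eq_mul] at hsum
    rw [htype, show Multiset.card (reflAt p 0).cycleType = (p - 1) / 2 by omega]
  obtain ⟨k, rfl⟩ := hp
  rw [Perm.nat_card_centralizer, hcycle, show (2 * k + 1 - 1) / 2 = k by omega, ZMod.card,
    Multiset.sum_replicate, smul_eq_mul, show 2 * k + 1 - k * 2 = 1 by omega,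
    Multiset.prod_replicate, Multiset.toFinset_replicate]
  split_ifs with hk
  · simp [hk]
  · rw [Finset.prod_singleton, Multiset.count_replicate_self, Nat.factorial_one, one_mul]

theorem conj_rot_one_reversed {f : Perm (ZMod p)} (hf : f ∈ centralizer {reflAt p 0}) :
    reflAt p 0 * (f * rot p 1 * f⁻¹) * (reflAt p 0)⁻¹ = (f * rot p 1 * f⁻¹)⁻¹ := by
  have h := (conj_reverses_conj_iff f _ _).mpr (reflAt_conj_rot 0 1)
  rwa [← eq_mul_inv_of_mul_eq (mem_centralizer_singleton_iff.mp hf).symm] at h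

theorem eq_of_conj_rot_one_eq (hp : Odd p) (hp1 : 1 < p) {f g : Perm (ZMod p)}
    (hf : f ∈ centralizer {reflAt p 0}) (hg : g ∈ centralizer {reflAt p 0})
    (h : f * rot p 1 * f⁻¹ = g * rot p 1 * g⁻¹) : f = g := by
  have hrefl : Commute (g⁻¹ * f) (reflAt p 0) :=
    mem_centralizer_singleton_iff.mp (mul_mem (inv_mem hg) hf)
  have hrot : Commute (g⁻¹ * f) (rot p 1) :=
    calc g⁻¹ * f * rot p 1 = g⁻¹ * (f * rot p 1 * f⁻¹) * f := by group
      _ = g⁻¹ * (g * rot p 1 * g⁻¹) * f := by rw [h]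
      _ = rot p 1 * (g⁻¹ * f) := by group
  have hρ := isHC_rot_one hp1
  exact (inv_mul_eq_one.mp (hρ.1.eq_one_of_commute_of_apply_eq hρ.apply_ne hrot
    (apply_zero_of_commute_reflAt hp hrefl))).symm

theorem exists_mem_centralizer_conj_rot_one_eq {σ : Perm (ZMod p)} (hσ : IsHC p σ)
    (hrev : reflAt p 0 * σ * (reflAt p 0)⁻¹ = σ⁻¹) :
    ∃ f ∈ centralizer {reflAt p 0}, f * rot p 1 * f⁻¹ = σ := by
  -- number the vertices along `σ`, starting from `0`
  set F : ZMod p → ZMod p := fun i => (σ ^ i.val) 0 with hF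
  have hpow : ∀ (i : ZMod p) (n : ℕ), (n : ZMod p) = i → F i = (σ ^ n) 0 := by
    intro i n h
    rw [hF, hσ.pow_eq_pow_iff.mpr (by rw [ZMod.natCast_zmod_val, h])]
  have hsucc : ∀ i, F (1 + i) = σ (F i) := fun i => by
    rw [hpow (1 + i) (i.val + 1) (by rw [Nat.cast_succ, ZMod.natCast_zmod_val, add_comm]),
      pow_succ', Perm.mul_apply]
  have hneg : ∀ i, F (-i) = -F i := fun i => by
    have hinv : σ ^ (-i).val = (σ ^ i.val)⁻¹ := eq_inv_of_mul_eq_one_left (by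
      rw [← pow_add, ← pow_zero σ, hσ.pow_eq_pow_iff, Nat.cast_add, ZMod.natCast_zmod_val,
        ZMod.natCast_zmod_val, neg_add_cancel, Nat.cast_zero])
    change (σ ^ (-i).val) 0 = -(σ ^ i.val) 0
    rw [hinv, ← inv_pow, ← hrev, conj_pow, Perm.mul_apply, Perm.mul_apply, reflAt_inv,
      reflAt_apply, reflAt_apply, sub_zero, zero_sub]
  have hsurj : Function.Surjective F := fun y => by
    obtain ⟨n, hn⟩ := hσ.1.exists_pow_eq (hσ.apply_ne 0) (hσ.apply_ne y)
    exact ⟨n, (hpow n n rfl).trans hn⟩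
  refine ⟨Equiv.ofBijective F (Finite.surjective_iff_bijective.mp hsurj),
    mem_centralizer_singleton_iff.mpr ?_, mul_inv_eq_iff_eq_mul.mpr ?_⟩
  · ext i
    simp only [Perm.mul_apply, Equiv.ofBijective_apply, reflAt_apply, zero_sub]
    exact hneg i
  · ext i
    exact hsucc i

theorem card_symHC_eq_card_centralizer (hp : Odd p) (hp1 : 1 < p) :
    Nat.card (SymHC p) = Nat.card (centralizer {reflAt p 0}) := by
  refine (Nat.card_eq_of_bijective (fun f => ⟨⟨f.1 * rot p 1 * f.1⁻¹,
    (isHC_rot_one hp1).conj f⟩, conj_rot_one_reversed f.2⟩) ⟨?_, ?_⟩).symm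
  · intro f g h
    exact Subtype.ext (eq_of_conj_rot_one_eq hp hp1 f.2 g.2 (congrArg (·.1.1) h))
  · intro σ
    obtain ⟨f, hf, hσ⟩ := exists_mem_centralizer_conj_rot_one_eq σ.1.2 σ.2
    exact ⟨⟨f, hf⟩, SymHC.ext hσ⟩

end Symmetric

/-- the number of rotation classes of Hamiltonian cycles with at least
one axis of reflective symmetry equals `((p-1)/2) · 2^((p-3)/2) · ((p-3)/2)!`. -/
theorem stmt5 (p : ℕ) [Fact p.Prime] (hp : 5 ≤ p) :
    Nat.card {q : RotClasses p // ∃ σ : HC p, Quotient.mk (rotSetoid p) σ = q ∧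
        ∃ s : ZMod p, FixedBy p (reflAt p s) σ.1}
      = (p - 1) / 2 * 2 ^ ((p - 3) / 2) * Nat.factorial ((p - 3) / 2) := by
  have hodd : Odd p := (Fact.out : p.Prime).odd_of_ne_two (by omega)
  have hcount := card_symHC_eq_two_mul_card_classes hodd (by omega)
  rw [card_symHC_eq_card_centralizer hodd (by omega), card_centralizer_reflAt_zero hodd] at hcount
  obtain ⟨k, rfl⟩ : ∃ k, p = 2 * k + 3 := by
    obtain ⟨j, rfl⟩ := hodd
    exact ⟨j - 1, by omega⟩
  rw [show (2 * k + 3 - 1) / 2 = k + 1 by omega, Nat.factorial_succ, pow_succ] at hcount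
  rw [show (2 * k + 3 - 1) / 2 = k + 1 by omega, show (2 * k + 3 - 3) / 2 = k by omega]
  linarith
end

section
/- For a prime p ≥ 5, every undirected Hamiltonian cycle on Z/p that is invariant under a nontrivial rotation k ↦ k + r (mod p) is a star polygon, i.e., equal to the cycle visiting 0, d, 2d, ..., (p-1)d mod p for some d with 1 ≤ d ≤ (p-1)/2. -/
open Equiv
set_option linter.unusedSectionVars false

variable (p : ℕ) [NeZero p]

/-!
A rotation `g` fixing the undirected cycle `σ` conjugates `σ` to `σ` or `σ⁻¹`, so `g²` commutes
with `σ`. For `p` odd, `g²` is again a nontrivial rotation, hence generates all rotations, and a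
permutation of `ZMod p` commuting with every translation is itself a translation `x ↦ x + a`.
Such a translation is a `p`-cycle exactly when `a ≠ 0`, and replacing `a` by `-a` (reversing
the cycle) brings its representative into `[1, (p - 1) / 2]`.
-/

theorem Commute.sq_left_of_mul_mul_inv_eq_inv {G : Type*} [Group G] {g a : G}
    (h : g * a * g⁻¹ = a⁻¹) : Commute (g ^ 2) a := by
  rw [Commute, SemiconjBy, sq]
  calc g * g * a = g * (g * a * g⁻¹) * g := by group
    _ = g * a⁻¹ * g := by rw [h]
    _ = (g * a * g⁻¹)⁻¹ * g * g := by group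
    _ = a * (g * g) := by rw [h, inv_inv, mul_assoc]

theorem Commute.sq_left_of_mul_mul_inv_eq_or_eq_inv {G : Type*} [Group G] {g a : G}
    (h : g * a * g⁻¹ = a ∨ g * a * g⁻¹ = a⁻¹) : Commute (g ^ 2) a := by
  rcases h with h | h
  · exact Commute.pow_left (mul_inv_eq_iff_eq_mul.mp h) 2
  · exact Commute.sq_left_of_mul_mul_inv_eq_inv h

section Translations

variable {G : Type*} [AddCommGroup G]

theorem Equiv.Perm.eq_addLeft_of_forall_commute {σ : Perm G}
    (h : ∀ g, Commute (Equiv.addLeft g) σ) : σ = Equiv.addLeft (σ 0) := by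
  ext x
  have hx := DFunLike.congr_fun (h x).eq 0
  simp only [Perm.mul_apply, coe_addLeft, add_zero] at hx
  rw [coe_addLeft, ← hx, add_comm]

theorem Equiv.Perm.commute_addLeft_of_mem_zmultiples {σ : Perm G} {s g : G}
    (h : Commute (Equiv.addLeft s) σ) (hg : g ∈ AddSubgroup.zmultiples s) :
    Commute (Equiv.addLeft g) σ := by
  obtain ⟨n, rfl⟩ := hg
  rw [← zsmul_addLeft]
  exact h.zpow_left n

end Translations

namespace ZMod

theorem eq_addLeft_of_commute_addLeft {p : ℕ} [Fact p.Prime] {σ : Perm (ZMod p)} {s : ZMod p}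
    (hs : s ≠ 0) (h : Commute (Equiv.addLeft s) σ) : σ = Equiv.addLeft (σ 0) :=
  Perm.eq_addLeft_of_forall_commute fun _ =>
    Perm.commute_addLeft_of_mem_zmultiples h
      (mem_zmultiples_of_prime_card (Nat.card_zmod p) hs)

theorem two_nsmul_ne_zero {p : ℕ} [Fact p.Prime] (hp : p ≠ 2) {r : ZMod p} (hr : r ≠ 0) :
    2 • r ≠ 0 := by
  rw [nsmul_eq_mul]
  exact mul_ne_zero (Ring.two_ne_zero (by rwa [ringChar_zmod_n])) hr

theorem exists_pos_le_half_eq_or_eq_neg {n : ℕ} [NeZero n] (hn : Odd n) {a : ZMod n}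
    (ha : a ≠ 0) : ∃ d : ℕ, 1 ≤ d ∧ d ≤ (n - 1) / 2 ∧ (a = d ∨ a = -d) := by
  refine ⟨a.valMinAbs.natAbs, ?_, ?_, ?_⟩
  · rw [Nat.one_le_iff_ne_zero, Int.natAbs_ne_zero, Ne, valMinAbs_eq_zero]
    exact ha
  · obtain ⟨k, rfl⟩ := hn
    have := a.natAbs_valMinAbs_le
    omega
  · have hcoe := a.coe_valMinAbs
    rcases Int.natAbs_eq a.valMinAbs with h | h <;> rw [h] at hcoe <;>
      simp only [Int.cast_neg, Int.cast_natCast] at hcoe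
    · exact Or.inl hcoe.symm
    · exact Or.inr hcoe.symm

end ZMod

/-- every undirected Hamiltonian cycle on `ZMod p` invariant under a
nontrivial rotation is a star polygon `0, d, 2d, …` for some `1 ≤ d ≤ (p-1)/2`. -/
theorem stmt10 (p : ℕ) [Fact p.Prime] (hp : 5 ≤ p) (σ : HC p) (r : ZMod p) (hr : r ≠ 0)
    (h : FixedBy p (rot p r) σ.1) :
    ∃ d : ℕ, 1 ≤ d ∧ d ≤ (p - 1) / 2 ∧
      (σ.1 = Equiv.addLeft (d : ZMod p) ∨ σ.1 = (Equiv.addLeft (d : ZMod p))⁻¹) := by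
  have hp2 : p ≠ 2 := by omega
  have hcomm : Commute (Equiv.addLeft (2 • r)) σ.1 := by
    rw [← nsmul_addLeft]
    exact Commute.sq_left_of_mul_mul_inv_eq_or_eq_inv h
  have hσ := ZMod.eq_addLeft_of_commute_addLeft (ZMod.two_nsmul_ne_zero hp2 hr) hcomm
  have ha : σ.1 0 ≠ 0 := fun h0 => σ.2.1.ne_one (by rw [hσ, h0, addLeft_zero])
  obtain ⟨d, hd1, hd2, hd | hd⟩ :=
    ZMod.exists_pos_le_half_eq_or_eq_neg ((Fact.out : p.Prime).odd_of_ne_two hp2) ha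
  · exact ⟨d, hd1, hd2, Or.inl (by rw [hσ, hd])⟩
  · exact ⟨d, hd1, hd2, Or.inr (by rw [hσ, hd, neg_addLeft])⟩
end

section
/- For a prime p ≥ 5, (p-1)^2 + (p-1)! − p·(p-1)·2^((p-3)/2)·((p-3)/2)! is divisible by 2p and the quotient is nonnegative for p ≥ 7. -/
open Equiv
set_option linter.unusedSectionVars false

variable (p : ℕ) [NeZero p]

lemma aux_fact (m : ℕ) (hm : 2 ≤ m) :
    (2*m+3)*2^m*Nat.factorial m ≤ Nat.factorial (2*m+1) := by
  induction m, hm using Nat.le_induction with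
  | base => decide
  | succ m hm ih =>
    have h1 : Nat.factorial (2*(m+1)+1) = (2*m+3)*((2*m+2)*Nat.factorial (2*m+1)) := by
      have : 2*(m+1)+1 = (2*m+2)+1 := by ring
      rw [this, Nat.factorial_succ]
      have : 2*m+2 = (2*m+1)+1 := by ring
      rw [this, Nat.factorial_succ]
    have h2 : (2*(m+1)+3)*2^(m+1)*Nat.factorial (m+1)
        = ((2*m+5)*(2*(m+1)))*(2^m*Nat.factorial m) := by
      rw [pow_succ, Nat.factorial_succ]; ring
    rw [h1, h2]
    have key : (2*m+5)*(2*(m+1)) ≤ ((2*m+3)*(2*m+2))*(2*m+3) := by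
      have h3 : (2*m+5) ≤ (2*m+3)*(2*m+3) := by nlinarith
      calc (2*m+5)*(2*(m+1)) ≤ ((2*m+3)*(2*m+3))*(2*(m+1)) := Nat.mul_le_mul_right _ h3
        _ = ((2*m+3)*(2*m+2))*(2*m+3) := by ring
    calc ((2*m+5)*(2*(m+1)))*(2^m*Nat.factorial m)
        ≤ (((2*m+3)*(2*m+2))*(2*m+3))*(2^m*Nat.factorial m) := Nat.mul_le_mul_right _ key
      _ = ((2*m+3)*(2*m+2))*((2*m+3)*2^m*Nat.factorial m) := by ring
      _ ≤ ((2*m+3)*(2*m+2))*Nat.factorial (2*m+1) := Nat.mul_le_mul_left _ ih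
      _ = (2*m+3)*((2*m+2)*Nat.factorial (2*m+1)) := by ring

/-- `(p-1)^2 + (p-1)! - p·(p-1)·2^((p-3)/2)·((p-3)/2)!` is divisible by
`2p`, and the quotient is nonnegative for `p ≥ 7`. -/
theorem stmt15 (p : ℕ) (hp : p.Prime) (h5 : 5 ≤ p) :
    ((2 * p : ℤ) ∣ ((p : ℤ) - 1) ^ 2 + Nat.factorial (p - 1)
        - (p : ℤ) * ((p : ℤ) - 1) * 2 ^ ((p - 3) / 2) * Nat.factorial ((p - 3) / 2)) ∧
    (7 ≤ p → 0 ≤ (((p : ℤ) - 1) ^ 2 + Nat.factorial (p - 1)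
        - (p : ℤ) * ((p : ℤ) - 1) * 2 ^ ((p - 3) / 2) * Nat.factorial ((p - 3) / 2))
          / (2 * p)) := by
  have hodd : p % 2 = 1 := Nat.odd_iff.mp (hp.odd_of_ne_two (by omega))
  set m := (p - 3) / 2 with hm
  have hpm : p = 2 * m + 3 := by omega
  set N : ℤ := ((p : ℤ) - 1) ^ 2 + Nat.factorial (p - 1)
        - (p : ℤ) * ((p : ℤ) - 1) * 2 ^ ((p - 3) / 2) * Nat.factorial ((p - 3) / 2) with hN
  have hdvd : (2 * p : ℤ) ∣ N := by
    have h2 : (2 : ℤ) ∣ N := by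
      have hf : (2 : ℕ) ∣ Nat.factorial (p - 1) :=
        Nat.dvd_factorial (by omega) (by omega)
      obtain ⟨k, hk⟩ := hf
      have hpk : ∃ j : ℤ, (p : ℤ) - 1 = 2 * j := ⟨(p - 1 : ℕ) / 2, by omega⟩
      obtain ⟨j, hj⟩ := hpk
      refine ⟨j ^ 2 * 2 + k - (p : ℤ) * j * 2 ^ ((p - 3) / 2) * Nat.factorial ((p - 3) / 2), ?_⟩
      rw [hN, hj, hk]
      push_cast
      ring
    have hpd : (p : ℤ) ∣ N := by
      haveI : Fact p.Prime := ⟨hp⟩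
      have : ((N : ZMod p)) = 0 := by
        rw [hN]
        push_cast
        rw [ZMod.natCast_self, ZMod.wilsons_lemma]
        ring
      exact (ZMod.intCast_zmod_eq_zero_iff_dvd N p).mp this
    have hco : IsCoprime (2 : ℤ) (p : ℤ) := by
      rw [Int.isCoprime_iff_gcd_eq_one]
      have : Nat.gcd 2 p = 1 := (Nat.coprime_primes Nat.prime_two hp).mpr (by omega) 
      simpa [Int.gcd] using this
    exact hco.mul_dvd h2 hpd
  refine ⟨hdvd, fun h7 => ?_⟩
  have hm2 : 2 ≤ m := by omega
  have key : (2*m+3)*(2*m+2)*2^m*Nat.factorial m ≤ Nat.factorial (2*m+2) := by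
    have := aux_fact m hm2
    have h1 : Nat.factorial (2*m+2) = (2*m+2)*Nat.factorial (2*m+1) := by
      have : 2*m+2 = (2*m+1)+1 := by ring
      rw [this, Nat.factorial_succ]
    rw [h1]
    calc (2*m+3)*(2*m+2)*2^m*Nat.factorial m
        = (2*m+2)*((2*m+3)*2^m*Nat.factorial m) := by ring
      _ ≤ (2*m+2)*Nat.factorial (2*m+1) := Nat.mul_le_mul_left _ this
  have hNnn : 0 ≤ N := by
    have hp1 : p - 1 = 2*m+2 := by omega
    have hp3 : (p - 3) / 2 = m := hm.symm
    have keyZ : ((p : ℤ)) * ((p : ℤ) - 1) * 2 ^ ((p - 3) / 2) * Nat.factorial ((p - 3) / 2)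
        ≤ Nat.factorial (p - 1) := by
      rw [hp1, hp3, hpm]
      push_cast
      have := key
      push_cast at this
      nlinarith [this]
    rw [hN]
    nlinarith [sq_nonneg ((p : ℤ) - 1), keyZ]
  exact Int.ediv_nonneg hNnn (by positivity)
end
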